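/- Let n, k, N ≥ 1 be integers and let A ⊆ ℤ^n be a finite set such that for every d ∈ {1, ..., N}^n there exists a(d) ∈ ℤ^n with {a(d) + i·d : 1 ≤ i ≤ k} ⊆ A. Then there exist a finite set A' ⊆ ℤ with |A'| ≤ |A| and N^n distinct integers d', each admitting an integer a'(d') such that {a'(d') + i·d' : 1 ≤ i ≤ k} ⊆ A'. In particular, |A| ≥ F'_k(N^n). -/
import Mathlib


/-- `Fk' k M` : the minimum cardinality of a finite set `B ⊆ ℤ` containing a `k`-term
arithmetic progression `{a + i·d : 1 ≤ i ≤ k}` for `M` distinct integer common differences `d`. -/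
noncomputable def Fk' (k M : ℕ) : ℕ :=
  sInf { m | ∃ B : Finset ℤ, B.card = m ∧ ∃ D : Finset ℤ, D.card = M ∧
    ∀ d ∈ D, ∃ a : ℤ, ∀ i ∈ Finset.Icc 1 k, a + (i : ℤ) * d ∈ B }

lemma digits_zero (T : ℤ) (hT : 0 < T) :
    ∀ (n : ℕ) (c : Fin n → ℤ), (∀ j, |c j| < T) →
      (∑ j, c j * T ^ (j : ℕ)) = 0 → ∀ j, c j = 0 := by
  intro n
  induction n with
  | zero => intro c _ _ j; exact j.elim0
  | succ m ih =>
    intro c hc hsum j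
    have hs : (∑ j, c j * T ^ (j : ℕ))
        = c 0 + T * ∑ j : Fin m, c j.succ * T ^ (j : ℕ) := by
      rw [Fin.sum_univ_succ, Finset.mul_sum]
      simp only [Fin.val_zero, pow_zero, mul_one, Fin.val_succ, pow_succ]
      congr 1
      apply Finset.sum_congr rfl
      intro j _
      ring
    set S := ∑ j : Fin m, c j.succ * T ^ (j : ℕ) with hS
    have h0 : c 0 + T * S = 0 := by rw [← hs, hsum]
    have hSz : S = 0 := by
      by_contra h
      have h1 : 1 ≤ |S| := Int.one_le_abs (by simpa using h)
      have : |c 0| = |T * S| := by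
        have : c 0 = -(T * S) := by linarith
        rw [this, abs_neg]
      rw [abs_mul, abs_of_pos hT] at this
      nlinarith [hc 0, abs_nonneg S]
    have hc0 : c 0 = 0 := by rw [hSz] at h0; linarith
    have hrest : ∀ j : Fin m, c j.succ = 0 :=
      ih (fun j => c j.succ) (fun j => hc j.succ) hSz
    exact Fin.cases hc0 hrest j

/-- If a finite set `A ⊆ ℤ^n` contains a `k`-term arithmetic progression with every common
difference `d ∈ {1,…,N}^n`, then there is a finite set `A' ⊆ ℤ` with `|A'| ≤ |A|` containing a
`k`-term arithmetic progression for `N^n` distinct integer common differences; in particular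
`|A| ≥ F'_k(N^n)`. -/
theorem stmt10 (n k N : ℕ) (hn : 1 ≤ n) (hk : 1 ≤ k) (hN : 1 ≤ N)
    (A : Finset (Fin n → ℤ))
    (hA : ∀ d : Fin n → ℤ, (∀ i, 1 ≤ d i ∧ d i ≤ (N : ℤ)) →
      ∃ a : Fin n → ℤ, ∀ i ∈ Finset.Icc 1 k, a + (i : ℤ) • d ∈ A) :
    (∃ A' : Finset ℤ, A'.card ≤ A.card ∧ ∃ D : Finset ℤ, D.card = N ^ n ∧
      ∀ d ∈ D, ∃ a : ℤ, ∀ i ∈ Finset.Icc 1 k, a + (i : ℤ) * d ∈ A') ∧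
    Fk' k (N ^ n) ≤ A.card := by
  set T : ℤ := (N : ℤ) + 1 with hT
  have hT0 : 0 < T := by positivity
  set φ : (Fin n → ℤ) → ℤ := fun x => ∑ j, x j * T ^ (j : ℕ) with hφ
  have hlin : ∀ (a d : Fin n → ℤ) (i : ℤ), φ (a + i • d) = φ a + i * φ d := by
    intro a d i
    simp only [hφ, Pi.add_apply, Pi.smul_apply, smul_eq_mul, add_mul,
      Finset.sum_add_distrib, Finset.mul_sum]
    congr 1
    apply Finset.sum_congr rfl
    intro j _
    ring
  set Box : Finset (Fin n → ℤ) := Fintype.piFinset (fun _ => Finset.Icc (1 : ℤ) N)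
    with hBox
  have hBoxcard : Box.card = N ^ n := by
    simp [hBox, Int.card_Icc]
  have hinj : Set.InjOn φ Box := by
    intro x hx y hy hxy
    have hx' : ∀ j, x j ∈ Finset.Icc (1 : ℤ) N := by
      intro j; exact (Fintype.mem_piFinset.mp hx) j
    have hy' : ∀ j, y j ∈ Finset.Icc (1 : ℤ) N := by
      intro j; exact (Fintype.mem_piFinset.mp hy) j
    have key : ∀ j, (x - y) j = 0 := by
      apply digits_zero T hT0 n (x - y)
      · intro j
        have h1 := Finset.mem_Icc.mp (hx' j)
        have h2 := Finset.mem_Icc.mp (hy' j)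
        simp only [Pi.sub_apply]
        rw [abs_lt]
        constructor <;> [linarith; linarith]
      · simp only [Pi.sub_apply, sub_mul, Finset.sum_sub_distrib]
        simpa [hφ] using sub_eq_zero_of_eq hxy
    funext j
    have := key j
    simp only [Pi.sub_apply] at this
    linarith
  have main : ∃ A' : Finset ℤ, A'.card ≤ A.card ∧ ∃ D : Finset ℤ, D.card = N ^ n ∧
      ∀ d ∈ D, ∃ a : ℤ, ∀ i ∈ Finset.Icc 1 k, a + (i : ℤ) * d ∈ A' := by
    refine ⟨A.image φ, Finset.card_image_le, Box.image φ, ?_, ?_⟩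
    · rw [Finset.card_image_of_injOn hinj, hBoxcard]
    · intro d' hd'
      obtain ⟨d, hd, rfl⟩ := Finset.mem_image.mp hd'
      have hdbox : ∀ i, 1 ≤ d i ∧ d i ≤ (N : ℤ) := by
        intro i
        exact Finset.mem_Icc.mp ((Fintype.mem_piFinset.mp hd) i)
      obtain ⟨a, ha⟩ := hA d hdbox
      refine ⟨φ a, fun i hi => ?_⟩
      rw [← hlin]
      exact Finset.mem_image_of_mem φ (ha i hi)
  refine ⟨main, ?_⟩
  obtain ⟨A', hA', D, hD, hprog⟩ := main
  have : Fk' k (N ^ n) ≤ A'.card :=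
    Nat.sInf_le ⟨A', rfl, D, hD, hprog⟩
  omega
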